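/- For any Boolean function f:{-1,1}^n→{-1,1} and ρ∈[0,1], the fraction of points y at which f fails to be ρ-SP is at most Σ_{S⊆[n]} (1-ρ^{|S|}) f̂_S². -/
import Mathlib


/-- Map a Boolean bit to ±1 ∈ ℝ (true ↦ 1, false ↦ -1). -/
def toR (b : Bool) : ℝ := if b then 1 else -1

/-- The character χ_S(x) = ∏_{i∈S} x_i. -/
def chi {n : ℕ} (S : Finset (Fin n)) (x : Fin n → Bool) : ℝ := ∏ i ∈ S, toR (x i)

/-- Fourier coefficient f̂_S = E[f(X) χ_S(X)]. -/
noncomputable def coeff {n : ℕ} (f : (Fin n → Bool) → ℝ) (S : Finset (Fin n)) : ℝ :=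
  (∑ x : Fin n → Bool, f x * chi S x) / 2 ^ n

/-- Noise operator via the Fourier expansion: T_ρ f (y) = Σ_S ρ^{|S|} f̂_S y^S. -/
noncomputable def TF {n : ℕ} (ρ : ℝ) (f : (Fin n → Bool) → ℝ) (y : Fin n → Bool) : ℝ :=
  ∑ S : Finset (Fin n), ρ ^ S.card * coeff f S * chi S y



lemma sum_chi {n : ℕ} (U : Finset (Fin n)) :
    ∑ x : Fin n → Bool, chi U x = if U = ∅ then (2:ℝ)^n else 0 := by
  have h : ∀ x : Fin n → Bool, chi U x = ∏ i : Fin n, (if i ∈ U then toR (x i) else 1) := by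
    intro x
    rw [Finset.prod_ite_mem, Finset.univ_inter, chi]
  set g : Fin n → Bool → ℝ := fun i b => if i ∈ U then toR b else 1 with hg
  have h' : ∀ x : Fin n → Bool, chi U x = ∏ i : Fin n, g i (x i) := h
  simp_rw [h']
  rw [← Fintype.piFinset_univ, ← Finset.prod_univ_sum]
  have h2 : ∀ i : Fin n, (∑ b : Bool, g i b) = if i ∈ U then 0 else 2 := by
    intro i; simp only [hg]; split_ifs <;> simp [toR]
  simp_rw [h2]
  split_ifs with hU
  · simp [hU]
  · obtain ⟨i, hi⟩ := Finset.nonempty_iff_ne_empty.2 hU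
    exact Finset.prod_eq_zero (Finset.mem_univ i) (by simp [hi])

lemma kernel_eq {n : ℕ} (ρ : ℝ) (x y : Fin n → Bool) :
    ∑ S : Finset (Fin n), ρ ^ S.card * chi S x * chi S y
      = ∏ i : Fin n, (1 + ρ * toR (x i) * toR (y i)) := by
  have := Finset.prod_add (fun i : Fin n => ρ * toR (x i) * toR (y i))
      (fun _ => (1:ℝ)) Finset.univ
  simp only [Finset.prod_const_one, mul_one] at this
  calc ∑ S : Finset (Fin n), ρ ^ S.card * chi S x * chi S y
      = ∑ S ∈ Finset.univ.powerset, ∏ i ∈ S, (ρ * toR (x i) * toR (y i)) := by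
        rw [Finset.powerset_univ]
        refine Finset.sum_congr rfl fun S _ => ?_
        rw [Finset.prod_mul_distrib, Finset.prod_mul_distrib, Finset.prod_const, chi, chi]
    _ = ∏ i : Fin n, (ρ * toR (x i) * toR (y i) + 1) := this.symm
    _ = ∏ i : Fin n, (1 + ρ * toR (x i) * toR (y i)) := by simp_rw [add_comm]

lemma TF_eq {n : ℕ} (ρ : ℝ) (f : (Fin n → Bool) → ℝ) (y : Fin n → Bool) :
    TF ρ f y = (∑ x : Fin n → Bool, f x * ∏ i : Fin n, (1 + ρ * toR (x i) * toR (y i))) / 2 ^ n := by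
  simp_rw [← kernel_eq, Finset.mul_sum]
  rw [Finset.sum_comm, TF]
  rw [Finset.sum_div]
  refine Finset.sum_congr rfl fun S _ => ?_
  have h : (∑ x : Fin n → Bool, f x * (ρ ^ S.card * chi S x * chi S y))
      = (∑ x : Fin n → Bool, f x * chi S x) * (ρ ^ S.card * chi S y) := by
    rw [Finset.sum_mul]
    exact Finset.sum_congr rfl fun x _ => by ring
  rw [coeff, h]
  ring

lemma abs_TF_le_one {n : ℕ} (ρ : ℝ) (hρ0 : 0 ≤ ρ) (hρ1 : ρ ≤ 1)
    (f : (Fin n → Bool) → ℝ) (hf : ∀ x, f x = 1 ∨ f x = -1) (y : Fin n → Bool) :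
    |TF ρ f y| ≤ 1 := by
  have habs : ∀ b : Bool, |toR b| = 1 := by intro b; cases b <;> simp [toR]
  have hK : ∀ x : Fin n → Bool, 0 ≤ ∏ i : Fin n, (1 + ρ * toR (x i) * toR (y i)) := by
    intro x
    refine Finset.prod_nonneg fun i _ => ?_
    have : |ρ * toR (x i) * toR (y i)| ≤ 1 := by
      rw [abs_mul, abs_mul, habs, habs, abs_of_nonneg hρ0]; simpa
    nlinarith [abs_le.1 this]
  have hsumK : ∑ x : Fin n → Bool, ∏ i : Fin n, (1 + ρ * toR (x i) * toR (y i)) = 2 ^ n := by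
    simp_rw [← kernel_eq]
    rw [Finset.sum_comm]
    have : ∀ S : Finset (Fin n), ∑ x : Fin n → Bool, ρ ^ S.card * chi S x * chi S y
        = if S = ∅ then (2:ℝ)^n else 0 := by
      intro S
      have h1 : ∑ x : Fin n → Bool, ρ ^ S.card * chi S x * chi S y
          = ρ ^ S.card * chi S y * ∑ x : Fin n → Bool, chi S x := by
        rw [Finset.mul_sum]; exact Finset.sum_congr rfl fun x _ => by ring
      rw [h1, sum_chi]
      split_ifs with hS
      · subst hS; simp [chi]
      · simp
    simp_rw [this]
    simp
  have habsf : ∀ x, |f x| = 1 := by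
    intro x; rcases hf x with h | h <;> simp [h]
  have hb : |∑ x : Fin n → Bool, f x * ∏ i : Fin n, (1 + ρ * toR (x i) * toR (y i))|
      ≤ 2 ^ n := by
    calc |∑ x : Fin n → Bool, f x * ∏ i : Fin n, (1 + ρ * toR (x i) * toR (y i))|
        ≤ ∑ x : Fin n → Bool, |f x * ∏ i : Fin n, (1 + ρ * toR (x i) * toR (y i))| :=
          Finset.abs_sum_le_sum_abs _ _
      _ = ∑ x : Fin n → Bool, ∏ i : Fin n, (1 + ρ * toR (x i) * toR (y i)) := by
          refine Finset.sum_congr rfl fun x _ => ?_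
          rw [abs_mul, habsf, one_mul, abs_of_nonneg (hK x)]
      _ = 2 ^ n := hsumK
  rw [TF_eq, abs_div, abs_of_nonneg (by positivity : (0:ℝ) ≤ 2 ^ n)]
  rw [div_le_one (by positivity)]
  simpa using hb

lemma sum_f_TF {n : ℕ} (ρ : ℝ) (f : (Fin n → Bool) → ℝ) :
    ∑ y : Fin n → Bool, f y * TF ρ f y
      = 2 ^ n * ∑ S : Finset (Fin n), ρ ^ S.card * (coeff f S) ^ 2 := by
  simp_rw [TF, Finset.mul_sum]
  rw [Finset.sum_comm]
  refine Finset.sum_congr rfl fun S _ => ?_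
  show ∑ y : Fin n → Bool, f y * (ρ ^ S.card * coeff f S * chi S y) = _
  have h1 : ∑ y : Fin n → Bool, f y * (ρ ^ S.card * coeff f S * chi S y)
      = ρ ^ S.card * coeff f S * ∑ y : Fin n → Bool, f y * chi S y := by
    rw [Finset.mul_sum]; exact Finset.sum_congr rfl fun y _ => by ring
  have h2 : ∑ y : Fin n → Bool, f y * chi S y = 2 ^ n * coeff f S := by
    rw [coeff]; field_simp
  rw [h1, h2]; ring

lemma parseval {n : ℕ} (f : (Fin n → Bool) → ℝ) (hf : ∀ x, f x = 1 ∨ f x = -1) :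
    ∑ S : Finset (Fin n), (coeff f S) ^ 2 = 1 := by
  have hdiag : ∀ x y : Fin n → Bool,
      ∏ i : Fin n, (1 + (1:ℝ) * toR (x i) * toR (y i)) = if x = y then 2 ^ n else 0 := by
    intro x y
    split_ifs with hxy
    · subst hxy
      have : ∀ i : Fin n, 1 + (1:ℝ) * toR (x i) * toR (x i) = 2 := by
        intro i; cases x i <;> simp [toR] <;> ring
      simp_rw [this]; simp
    · obtain ⟨i, hi⟩ := Function.ne_iff.1 hxy
      refine Finset.prod_eq_zero (Finset.mem_univ i) ?_
      revert hi; cases x i <;> cases y i <;>simp [toR]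
  have hTF1 : ∀ y, TF 1 f y = f y := by
    intro y
    rw [TF_eq]
    simp_rw [hdiag, mul_ite, mul_zero]
    rw [Finset.sum_ite_eq' Finset.univ y (fun x => f x * 2 ^ n)]
    simp [mul_div_assoc]
  have := sum_f_TF 1 f
  simp_rw [hTF1, one_pow, one_mul] at this
  have hsq : ∀ y : Fin n → Bool, f y * f y = 1 := by
    intro y; rcases hf y with h | h <;> rw [h] <;> ring
  simp_rw [hsq] at this
  rw [Finset.sum_const, Finset.card_univ, Fintype.card_fun, Fintype.card_bool,
    Fintype.card_fin, nsmul_eq_mul] at this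
  have h2 : (2:ℝ) ^ n ≠ 0 := by positivity
  have h3 : ((2 ^ n : ℕ) : ℝ) = 2 ^ n := by push_cast; ring
  rw [h3] at this
  exact mul_left_cancel₀ h2 this.symm

/-- The fraction of points y at which f fails to be ρ-SP
(i.e. f(y)·T_ρ f(y) < 0) is at most Σ_S (1 - ρ^{|S|}) f̂_S². -/
theorem fraction_non_sp_le {n : ℕ} (ρ : ℝ) (hρ0 : 0 ≤ ρ) (hρ1 : ρ ≤ 1)
    (f : (Fin n → Bool) → ℝ) (hf : ∀ x, f x = 1 ∨ f x = -1) :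
    ((Finset.univ.filter fun y : Fin n → Bool => f y * TF ρ f y < 0).card : ℝ) / 2 ^ n
      ≤ ∑ S : Finset (Fin n), (1 - ρ ^ S.card) * (coeff f S) ^ 2 := by
  set N := Finset.univ.filter fun y : Fin n → Bool => f y * TF ρ f y < 0 with hN
  have hpt : ∀ y : Fin n → Bool, 0 ≤ 1 - f y * TF ρ f y := by
    intro y
    have h1 : |TF ρ f y| ≤ 1 := abs_TF_le_one ρ hρ0 hρ1 f hf y
    have h2 : |f y| = 1 := by rcases hf y with h | h <;> simp [h]
    have : f y * TF ρ f y ≤ |f y * TF ρ f y| := le_abs_self _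
    rw [abs_mul, h2, one_mul] at this
    linarith
  have hcard : (N.card : ℝ) ≤ ∑ y : Fin n → Bool, (1 - f y * TF ρ f y) := by
    calc (N.card : ℝ) = ∑ y ∈ N, (1:ℝ) := by simp
      _ ≤ ∑ y ∈ N, (1 - f y * TF ρ f y) := by
          refine Finset.sum_le_sum fun y hy => ?_
          have : f y * TF ρ f y < 0 := (Finset.mem_filter.1 hy).2
          linarith
      _ ≤ ∑ y : Fin n → Bool, (1 - f y * TF ρ f y) :=
          Finset.sum_le_sum_of_subset_of_nonneg (Finset.filter_subset _ _)
            (fun y _ _ => hpt y)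
  have hsum : ∑ y : Fin n → Bool, (1 - f y * TF ρ f y)
      = 2 ^ n * ∑ S : Finset (Fin n), (1 - ρ ^ S.card) * (coeff f S) ^ 2 := by
    rw [Finset.sum_sub_distrib, sum_f_TF, Finset.sum_const, Finset.card_univ,
      Fintype.card_fun, Fintype.card_bool, Fintype.card_fin, nsmul_eq_mul]
    have hp := parseval f hf
    push_cast
    have key : (2:ℝ) ^ n * ∑ S : Finset (Fin n), (1 - ρ ^ S.card) * coeff f S ^ 2
        = ∑ S : Finset (Fin n),
            ((2:ℝ) ^ n * coeff f S ^ 2 - 2 ^ n * (ρ ^ S.card * coeff f S ^ 2)) := by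
      rw [Finset.mul_sum]
      exact Finset.sum_congr rfl fun S _ => by ring
    rw [key, Finset.sum_sub_distrib, ← Finset.mul_sum, ← Finset.mul_sum, hp]
  have h2n : (0:ℝ) < 2 ^ n := by positivity
  rw [div_le_iff₀ h2n]
  calc (N.card : ℝ) ≤ ∑ y : Fin n → Bool, (1 - f y * TF ρ f y) := hcard
    _ = (∑ S : Finset (Fin n), (1 - ρ ^ S.card) * (coeff f S) ^ 2) * 2 ^ n := by
        rw [hsum]; ring
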